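/- Let P and Q be orthogonal projections on a Hilbert space H such that Q - P is compact. Then the operator T = QP, viewed as a map from im(P) to im(Q), is Fredholm. -/

import Mathlib

open ContinuousLinearMap

/-- A bounded operator is Fredholm if its kernel is finite dimensional and its
cokernel is finite dimensional. -/
def IsFredholmOp {E F : Type*} [NormedAddCommGroup E] [NormedSpace ℂ E]
    [NormedAddCommGroup F] [NormedSpace ℂ F] (T : E →L[ℂ] F) : Prop :=
  FiniteDimensional ℂ (LinearMap.ker (T : E →ₗ[ℂ] F)) ∧ FiniteDimensional ℂ (F ⧸ LinearMap.range (T : E →ₗ[ℂ] F))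

/-- The operator `Q P` viewed as a map from `im P` to `im Q`. -/
noncomputable def relOp {H : Type*} [NormedAddCommGroup H] [InnerProductSpace ℂ H]
    [CompleteSpace H] (P Q : H →L[ℂ] H) :
    ↥(LinearMap.range (P : H →ₗ[ℂ] H)) →L[ℂ] ↥(LinearMap.range (Q : H →ₗ[ℂ] H)) :=
  (Q.comp (LinearMap.range (P : H →ₗ[ℂ] H)).subtypeL).codRestrict (LinearMap.range (Q : H →ₗ[ℂ] H))
    (fun x => LinearMap.mem_range_self (Q : H →ₗ[ℂ] H) _)

/-
Write `T = Q P : im P → im Q`. Its adjoint is `T* = P Q : im Q → im P`, and both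
`1 - T* T = P (P - Q)` on `im P` and `1 - T T* = Q (Q - P)` on `im Q` are compact.
If `1 - S T` is compact, then `ker T` is finite-dimensional, being a closed subspace on which a
compact operator acts as the identity, and `T` is bounded below on a closed complement `W` of
`ker T`: for unit vectors `u n ∈ W` with `T (u n) → 0`, a subsequence of `(1 - S T) (u n)`
converges, hence so does `u n = (1 - S T) (u n) + S (T (u n))`, to a unit vector of `W ∩ ker T`.
So `range T` is closed. Applied to `T` and `T*`, this gives finite-dimensional `ker T` and
`(range T)ᗮ = ker T*`.
-/

open Filter Topology NNReal
open scoped InnerProduct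

namespace ContinuousLinearMap

variable {𝕜 E F : Type*} [RCLike 𝕜] [NormedAddCommGroup E] [NormedSpace 𝕜 E]
  [NormedAddCommGroup F] [NormedSpace 𝕜 F] {T : E →L[𝕜] F} {S : F →L[𝕜] E}

theorem finiteDimensional_ker_of_isCompactOperator_one_sub_comp
    (hK : IsCompactOperator (1 - S ∘L T : E →L[𝕜] E)) : FiniteDimensional 𝕜 T.ker := by
  have hfix : ∀ x ∈ T.ker, (1 - S ∘L T) x = x := fun x (hx : T x = 0) ↦ by simp [hx]
  have hmaps : ∀ x ∈ T.ker, (1 - S ∘L T) x ∈ T.ker := fun x hx ↦ (hfix x hx).symm ▸ hx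
  have hid : ((1 - S ∘L T : E →L[𝕜] E) : E →ₗ[𝕜] E).restrict hmaps = LinearMap.id :=
    LinearMap.ext fun x ↦ Subtype.ext (hfix x x.2)
  have hres := hK.restrict hmaps T.isClosed_ker
  rw [hid] at hres
  exact .of_isCompactOperator_id hres

theorem exists_tendsto_subseq_of_isCompactOperator_one_sub_comp
    (hK : IsCompactOperator (1 - S ∘L T : E →L[𝕜] E)) {u : ℕ → E}
    (hu : ∀ n, ‖u n‖ ≤ 1) (hTu : Tendsto (T ∘ u) atTop (𝓝 0)) :
    ∃ y, ∃ φ : ℕ → ℕ, StrictMono φ ∧ Tendsto (u ∘ φ) atTop (𝓝 y) := by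
  obtain ⟨C, hC, hKC⟩ := hK.image_closedBall_subset_compact 1
  obtain ⟨y, -, φ, hφ, hy⟩ :=
    hC.tendsto_subseq fun n ↦ hKC ⟨u n, by simpa using hu n, rfl⟩
  refine ⟨y, φ, hφ, ?_⟩
  have hST := ((S.continuous.tendsto 0).comp (hTu.comp hφ.tendsto_atTop)).add hy
  simpa [Function.comp_def] using hST

theorem exists_norm_le_mul_norm_of_isCompactOperator_one_sub_comp
    (hK : IsCompactOperator (1 - S ∘L T : E →L[𝕜] E)) {W : Submodule 𝕜 E}
    (hW : IsClosed (W : Set E)) (hWT : Disjoint W T.ker) :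
    ∃ c : ℝ≥0, ∀ w ∈ W, ‖w‖ ≤ c * ‖T w‖ := by
  by_contra! h
  have hunit : ∀ n : ℕ, ∃ u ∈ W, ‖u‖ = 1 ∧ ‖T u‖ ≤ 1 / (n + 1) := by
    intro n
    obtain ⟨w, hw, hlt⟩ := h (n + 1)
    have hw0 : w ≠ 0 := by rintro rfl; simp at hlt
    refine ⟨(‖w‖⁻¹ : 𝕜) • w, W.smul_mem _ hw, norm_smul_inv_norm hw0, ?_⟩
    have hTw : ‖T ((‖w‖⁻¹ : 𝕜) • w)‖ = ‖T w‖ / ‖w‖ := by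
      rw [map_smul, norm_smul, norm_inv, RCLike.norm_ofReal, abs_norm, inv_mul_eq_div]
    rw [hTw, div_le_div_iff₀ (norm_pos_iff.mpr hw0) (by positivity)]
    push_cast at hlt
    linarith
  choose u huW hu1 hTu using hunit
  have hTu0 : Tendsto (T ∘ u) atTop (𝓝 0) :=
    squeeze_zero_norm hTu tendsto_one_div_add_atTop_nhds_zero_nat
  obtain ⟨y, φ, hφ, hy⟩ :=
    exists_tendsto_subseq_of_isCompactOperator_one_sub_comp hK (fun n ↦ (hu1 n).le) hTu0
  have hyW : y ∈ W := hW.mem_of_tendsto hy (.of_forall fun n ↦ huW (φ n))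
  have hTy : T y = 0 :=
    tendsto_nhds_unique ((T.continuous.tendsto y).comp hy) (hTu0.comp hφ.tendsto_atTop)
  have hy1 : ‖y‖ = 1 := tendsto_nhds_unique hy.norm (by simp [hu1])
  simp [(Submodule.disjoint_def.mp hWT) y hyW hTy] at hy1

theorem range_eq_range_comp_subtypeL_of_isCompl {W : Submodule 𝕜 E} (hW : IsCompl T.ker W) :
    (T.range : Set F) = Set.range (T ∘L W.subtypeL) := by
  ext y
  constructor
  · rintro ⟨x, rfl⟩
    obtain ⟨k, hk, w, hw, rfl⟩ :=
      Submodule.mem_sup.mp (hW.sup_eq_top ▸ Submodule.mem_top (x := x))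
    exact ⟨⟨w, hw⟩, by simp [show T k = 0 from hk]⟩
  · rintro ⟨w, rfl⟩
    exact ⟨w, rfl⟩

theorem isClosed_range_of_isCompactOperator_one_sub_comp [CompleteSpace E]
    (hK : IsCompactOperator (1 - S ∘L T : E →L[𝕜] E)) : IsClosed (T.range : Set F) := by
  have := finiteDimensional_ker_of_isCompactOperator_one_sub_comp hK
  obtain ⟨W, hW, hcompl⟩ :=
    (Submodule.ClosedComplemented.of_finiteDimensional T.ker).exists_isClosed_isCompl
  obtain ⟨c, hc⟩ :=
    exists_norm_le_mul_norm_of_isCompactOperator_one_sub_comp hK hW hcompl.symm.disjoint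
  have : CompleteSpace W := hW.completeSpace_coe
  rw [range_eq_range_comp_subtypeL_of_isCompl hcompl]
  exact ((T ∘L W.subtypeL).antilipschitz_of_bound fun w ↦ hc w w.2).isClosed_range
    (T ∘L W.subtypeL).uniformContinuous

theorem IsIdempotentElem.apply_coe_range {R M : Type*} [Semiring R] [TopologicalSpace M]
    [AddCommMonoid M] [Module R M] {P : M →L[R] M} (hP : IsIdempotentElem P) (x : P.range) :
    P x = x :=
  (LinearMap.IsIdempotentElem.mem_range_iff hP.toLinearMap).mp x.2

end ContinuousLinearMap

theorem Submodule.finiteDimensional_quotient_of_isClosed {𝕜 F : Type*} [RCLike 𝕜]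
    [NormedAddCommGroup F] [InnerProductSpace 𝕜 F] [CompleteSpace F] {U : Submodule 𝕜 F}
    (hU : IsClosed (U : Set F)) [FiniteDimensional 𝕜 Uᗮ] : FiniteDimensional 𝕜 (F ⧸ U) :=
  have : CompleteSpace U := hU.completeSpace_coe
  (U.quotientEquivOfIsCompl Uᗮ U.isCompl_orthogonal).symm.finiteDimensional

theorem isFredholmOp_of_isCompactOperator_one_sub_adjoint_comp_self {E F : Type*}
    [NormedAddCommGroup E] [InnerProductSpace ℂ E] [CompleteSpace E]
    [NormedAddCommGroup F] [InnerProductSpace ℂ F] [CompleteSpace F] {T : E →L[ℂ] F}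
    (hT : IsCompactOperator (1 - T† ∘L T : E →L[ℂ] E))
    (hT' : IsCompactOperator (1 - T ∘L T† : F →L[ℂ] F)) :
    IsFredholmOp T := by
  have : FiniteDimensional ℂ T.rangeᗮ := by
    rw [orthogonal_range]
    exact finiteDimensional_ker_of_isCompactOperator_one_sub_comp hT'
  exact ⟨finiteDimensional_ker_of_isCompactOperator_one_sub_comp hT,
    Submodule.finiteDimensional_quotient_of_isClosed
      (isClosed_range_of_isCompactOperator_one_sub_comp hT)⟩

section relOp

variable {H : Type*} [NormedAddCommGroup H] [InnerProductSpace ℂ H] [CompleteSpace H]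
  {P Q : H →L[ℂ] H}

@[simp]
theorem coe_relOp_apply (x : P.range) : (relOp P Q x : H) = Q x := rfl

theorem adjoint_relOp [CompleteSpace P.range] [CompleteSpace Q.range]
    (hPsa : IsSelfAdjoint P) (hPidem : IsIdempotentElem P)
    (hQsa : IsSelfAdjoint Q) (hQidem : IsIdempotentElem Q) :
    (relOp P Q)† = relOp Q P := by
  refine ((eq_adjoint_iff _ _).mpr fun y x ↦ ?_).symm
  simp only [Submodule.coe_inner, coe_relOp_apply]
  calc inner ℂ (P y) (x : H) = inner ℂ (y : H) (P x) := hPsa.isSymmetric y x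
    _ = inner ℂ (Q y) (x : H) := by
      rw [IsIdempotentElem.apply_coe_range hPidem, IsIdempotentElem.apply_coe_range hQidem]
    _ = inner ℂ (y : H) (Q x) := hQsa.isSymmetric y x

theorem isCompactOperator_one_sub_relOp_comp_relOp (hPidem : IsIdempotentElem P)
    (hcomp : IsCompactOperator (P - Q)) :
    IsCompactOperator (1 - relOp Q P ∘L relOp P Q : P.range →L[ℂ] P.range) := by
  have heq : ⇑(1 - relOp Q P ∘L relOp P Q) =
      Set.codRestrict (P ∘L (P - Q) ∘L P.range.subtypeL) P.range (fun x ↦ ⟨_, rfl⟩) := by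
    ext x
    simp [IsIdempotentElem.apply_coe_range hPidem]
  rw [heq]
  exact ((hcomp.clm_comp P).comp_clm _).codRestrict _ hPidem.isClosed_range

end relOp

/-- If `P`, `Q` are orthogonal projections on a Hilbert space with `Q - P` compact, then
`T = QP : im P → im Q` is Fredholm. -/
theorem relOp_fredholm {H : Type*} [NormedAddCommGroup H] [InnerProductSpace ℂ H]
    [CompleteSpace H] (P Q : H →L[ℂ] H)
    (hPsa : IsSelfAdjoint P) (hPidem : P.comp P = P)
    (hQsa : IsSelfAdjoint Q) (hQidem : Q.comp Q = Q)
    (hcomp : IsCompactOperator ⇑(Q - P)) :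
    IsFredholmOp (relOp P Q) := by
  have : CompleteSpace P.range := (IsIdempotentElem.isClosed_range hPidem).completeSpace_coe
  have : CompleteSpace Q.range := (IsIdempotentElem.isClosed_range hQidem).completeSpace_coe
  have hcomp' : IsCompactOperator ⇑(P - Q) := by simpa using hcomp.neg
  have hadj : (relOp P Q)† = relOp Q P := adjoint_relOp hPsa hPidem hQsa hQidem
  refine isFredholmOp_of_isCompactOperator_one_sub_adjoint_comp_self ?_ ?_ <;> rw [hadj]
  · exact isCompactOperator_one_sub_relOp_comp_relOp hPidem hcomp'
  · exact isCompactOperator_one_sub_relOp_comp_relOp hQidem hcomp
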